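/- arXiv:1905.09493 — 3 statements merged into one kernel-verified Lean document; each statement's English description precedes it below -/
import Mathlib

section
/- Step of the Bernstein identity: Let k ≥ 0, a ∈ ℂ, and 1 ≤ i ≤ n. Define h_i : ℝ₊ⁿ → ℂ by h_i(y) = D(y)^{a−1} · ∏_{l=i}^n y_l, with D(y)^{a−1} = ∏_{m=1}^n y_m^{a−1} (principal powers of positive reals). Then for every x ∈ ℝ₊ⁿ with pairwise distinct coordinates: T_i(k)h_i(x) = (a + k(i−1)) · D(x)^{a−1} · ∏_{l=i+1}^n x_l. -/
open MeasureTheory Finset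

/-- The type-A rational Dunkl operator `T_i(k)` applied to `f` at `x`. -/
noncomputable def dunklOp (n : ℕ) (k : ℝ) (i : Fin n) (f : (Fin n → ℝ) → ℂ)
    (x : Fin n → ℝ) : ℂ :=
  fderiv ℝ f x (Pi.single i 1) +
    (k : ℂ) * ∑ j ∈ Finset.univ.erase i,
      (f x - f (x ∘ Equiv.swap i j)) / ((x i : ℂ) - (x j : ℂ))

/-- `E` is the type-A Dunkl kernel with multiplicity `k`:  for each `z`, `x ↦ E x z` is the
unique real-analytic function on `ℝⁿ` with value `1` at `0` satisfying the Dunkl eigenvalue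
equations `T_i(k) E(·,z) = z_i E(·,z)` at points with pairwise distinct coordinates; moreover
`z ↦ E x z` is entire. -/
structure IsDunklKernel (n : ℕ) (k : ℝ) (E : (Fin n → ℝ) → (Fin n → ℂ) → ℂ) : Prop where
  analyticOn_fst : ∀ z, AnalyticOn ℝ (fun x => E x z) Set.univ
  eval_zero : ∀ z, E 0 z = 1
  eigen : ∀ z (i : Fin n) (x : Fin n → ℝ), Function.Injective x →
    dunklOp n k i (fun y => E y z) x = z i * E x z
  unique : ∀ z (f : (Fin n → ℝ) → ℂ), AnalyticOn ℝ f Set.univ → f 0 = 1 →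
    (∀ (i : Fin n) (x : Fin n → ℝ), Function.Injective x →
      dunklOp n k i f x = z i * f x) → ∀ x, f x = E x z
  analyticOn_snd : ∀ x, AnalyticOn ℂ (fun z => E x z) Set.univ

/-!
Write `h_i(y) = ∏_m g_m(y_m)` with `g_m(t) = t^(a-1)` for `m < i` and `g_m(t) = t^(a-1) t`
for `m ≥ i`. Since `∂_t (t^(a-1) t) = a t^(a-1)`, the partial derivative `∂_i h_i(x)` is
`a D(x)^(a-1) ∏_{l > i} x_l`. For `j > i` the transposition `σ_{ij}` permutes the factors
of `h_i`, so its difference quotient vanishes; for `j < i` it replaces the factor `x_i` by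
`x_j`, so the difference quotient is `D(x)^(a-1) ∏_{l > i} x_l`, and there are `i - 1` such `j`.
-/

theorem fderiv_prod_apply_single {ι : Type*} [Fintype ι] [DecidableEq ι]
    {g : ι → ℝ → ℂ} {x : ι → ℝ} (hg : ∀ m, DifferentiableAt ℝ (g m) (x m)) {i : ι} {d : ℂ}
    (hgi : HasDerivAt (g i) d (x i)) :
    fderiv ℝ (fun y : ι → ℝ => ∏ m, g m (y m)) x (Pi.single i 1) =
      d * ∏ m ∈ univ.erase i, g m (x m) := by
  have hdiff : DifferentiableAt ℝ (fun y : ι → ℝ => ∏ m, g m (y m)) x := by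
    fun_prop
  have hline : (fun y : ι → ℝ => ∏ m, g m (y m)) ∘ Function.update x i =
      fun t => g i t * ∏ m ∈ univ.erase i, g m (x m) := by
    funext t
    rw [Function.comp_apply, ← mul_prod_erase univ _ (mem_univ i), Function.update_self]
    congr 1
    exact prod_congr rfl fun m hm => by rw [Function.update_of_ne (ne_of_mem_erase hm)]
  have h := hdiff.hasFDerivAt.comp_hasDerivAt_of_eq (x i) (hasDerivAt_update x i (x i))
    (Function.update_eq_self i x).symm
  rw [hline] at h
  exact h.unique (hgi.mul_const _)

theorem hasDerivAt_ofReal_cpow_const_of_pos {t : ℝ} (ht : 0 < t) (b : ℂ) :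
    HasDerivAt (fun s : ℝ => (s : ℂ) ^ b) (b * (t : ℂ) ^ (b - 1)) t :=
  (Complex.hasStrictDerivAt_cpow_const (Complex.ofReal_mem_slitPlane.2 ht)).hasDerivAt.comp_ofReal

theorem ofReal_cpow_sub_one_mul_self {t : ℝ} (ht : t ≠ 0) (b : ℂ) :
    (t : ℂ) ^ (b - 1) * t = (t : ℂ) ^ b := by
  conv_rhs => rw [← sub_add_cancel b 1, Complex.cpow_add _ _ (Complex.ofReal_ne_zero.2 ht),
    Complex.cpow_one]

theorem hasDerivAt_ofReal_cpow_sub_one_mul_self {t : ℝ} (ht : 0 < t) (b : ℂ) :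
    HasDerivAt (fun s : ℝ => (s : ℂ) ^ (b - 1) * s) (b * (t : ℂ) ^ (b - 1)) t := by
  refine (hasDerivAt_ofReal_cpow_const_of_pos ht b).congr_of_eventuallyEq ?_
  filter_upwards [eventually_ne_nhds ht.ne'] with s hs using ofReal_cpow_sub_one_mul_self hs b

section Bernstein

variable {n : ℕ} (a : ℂ) (i : Fin n)

noncomputable def bernsteinFun (y : Fin n → ℝ) : ℂ :=
  (∏ m, (y m : ℂ) ^ (a - 1)) * ∏ l ∈ Ici i, (y l : ℂ)

theorem bernsteinFun_eq_prod (y : Fin n → ℝ) :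
    bernsteinFun a i y = ∏ m, ((y m : ℂ) ^ (a - 1) * if i ≤ m then (y m : ℂ) else 1) := by
  rw [bernsteinFun, prod_mul_distrib, ← prod_filter, filter_le_eq_Ici]

theorem bernsteinFun_eq (y : Fin n → ℝ) :
    bernsteinFun a i y =
      (∏ m, (y m : ℂ) ^ (a - 1)) * ((y i : ℂ) * ∏ l ∈ Ioi i, (y l : ℂ)) := by
  rw [bernsteinFun, Ici_eq_cons_Ioi, prod_cons]

variable {a i} {x : Fin n → ℝ}

theorem bernsteinFun_comp_swap_of_lt {j : Fin n} (hij : i < j) :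
    bernsteinFun a i (x ∘ Equiv.swap i j) = bernsteinFun a i x := by
  have hsupp : {l | Equiv.swap i j l ≠ l} ⊆ Ici i := by
    intro l hl
    rcases (Equiv.swap_apply_ne_self_iff.1 hl).2 with rfl | rfl
    · simp
    · simp [hij.le]
  simp only [bernsteinFun, Function.comp_apply,
    Equiv.prod_comp (Equiv.swap i j) fun m => (x m : ℂ) ^ (a - 1),
    Equiv.Perm.prod_comp (Equiv.swap i j) (Ici i) (fun l => (x l : ℂ)) hsupp]

theorem bernsteinFun_comp_swap_of_gt {j : Fin n} (hji : j < i) :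
    bernsteinFun a i (x ∘ Equiv.swap i j) =
      (∏ m, (x m : ℂ) ^ (a - 1)) * ((x j : ℂ) * ∏ l ∈ Ioi i, (x l : ℂ)) := by
  rw [bernsteinFun_eq]
  simp only [Function.comp_apply, Equiv.swap_apply_left,
    Equiv.prod_comp (Equiv.swap i j) fun m => (x m : ℂ) ^ (a - 1)]
  congr 2
  refine prod_congr rfl fun l hl => ?_
  have hil : i < l := mem_Ioi.1 hl
  rw [Equiv.swap_apply_of_ne_of_ne hil.ne' (hji.trans hil).ne']

theorem bernsteinFun_reflection_quotient (hx : Function.Injective x) {j : Fin n}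
    (hji : j ≠ i) :
    (bernsteinFun a i x - bernsteinFun a i (x ∘ Equiv.swap i j)) / ((x i : ℂ) - (x j : ℂ)) =
      if j < i then (∏ m, (x m : ℂ) ^ (a - 1)) * ∏ l ∈ Ioi i, (x l : ℂ) else 0 := by
  rcases lt_or_gt_of_ne hji with hlt | hgt
  · have hne : (x i : ℂ) - (x j : ℂ) ≠ 0 :=
      sub_ne_zero.2 (Complex.ofReal_injective.ne (hx.ne hji.symm))
    rw [if_pos hlt, bernsteinFun_comp_swap_of_gt hlt, bernsteinFun_eq, div_eq_iff hne]
    ring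
  · rw [if_neg hgt.not_gt, bernsteinFun_comp_swap_of_lt hgt, sub_self, zero_div]

theorem sum_bernsteinFun_reflection_quotient (hx : Function.Injective x) :
    ∑ j ∈ univ.erase i,
        (bernsteinFun a i x - bernsteinFun a i (x ∘ Equiv.swap i j)) / ((x i : ℂ) - (x j : ℂ)) =
      (i : ℕ) * ((∏ m, (x m : ℂ) ^ (a - 1)) * ∏ l ∈ Ioi i, (x l : ℂ)) := by
  have hfilter : (univ.erase i).filter (· < i) = Iio i := by
    ext j
    simpa using fun h : j < i => h.ne
  rw [sum_congr rfl fun j hj => bernsteinFun_reflection_quotient hx (ne_of_mem_erase hj),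
    ← sum_filter, hfilter, sum_const, Fin.card_Iio, nsmul_eq_mul]

theorem fderiv_bernsteinFun_apply_single (hx : ∀ m, 0 < x m) :
    fderiv ℝ (bernsteinFun a i) x (Pi.single i 1) =
      a * (∏ m, (x m : ℂ) ^ (a - 1)) * ∏ l ∈ Ioi i, (x l : ℂ) := by
  set g : Fin n → ℝ → ℂ := fun m t => (t : ℂ) ^ (a - 1) * if i ≤ m then (t : ℂ) else 1
  have hg : ∀ m, DifferentiableAt ℝ (g m) (x m) := fun m =>
    ((hasDerivAt_ofReal_cpow_const_of_pos (hx m) _).differentiableAt).mul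
      (by by_cases h : i ≤ m <;> simp only [h, if_true, if_false] <;> fun_prop)
  have hgi : HasDerivAt (g i) (a * (x i : ℂ) ^ (a - 1)) (x i) := by
    simpa [g] using hasDerivAt_ofReal_cpow_sub_one_mul_self (hx i) a
  have hsplit := bernsteinFun_eq_prod a i x
  rw [← mul_prod_erase univ _ (mem_univ i), bernsteinFun_eq] at hsplit
  have hxi : (x i : ℂ) ≠ 0 := Complex.ofReal_ne_zero.2 (hx i).ne'
  rw [show bernsteinFun a i = fun y => ∏ m, g m (y m) from funext (bernsteinFun_eq_prod a i),
    fderiv_prod_apply_single hg hgi]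
  apply mul_left_cancel₀ hxi
  simp only [g, le_refl, if_true] at hsplit ⊢
  linear_combination (-a) * hsplit

end Bernstein

/-- `i : Fin n` is 0-based, so the paper's `k(i-1)` appears as `k * i`. -/
theorem bernstein_step_general (n : ℕ) (k : ℝ)
    (a : ℂ) (i : Fin n) :
    ∀ x : Fin n → ℝ, (∀ m, 0 < x m) → Function.Injective x →
      dunklOp n k i
        (fun y => (∏ m, (y m : ℂ) ^ (a - 1)) * ∏ l ∈ Finset.Ici i, (y l : ℂ)) x
      = (a + ((k * (i : ℕ) : ℝ) : ℂ)) * (∏ m, (x m : ℂ) ^ (a - 1)) *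
          ∏ l ∈ Finset.Ioi i, (x l : ℂ) := by
  intro x hx hinj
  change dunklOp n k i (bernsteinFun a i) x = _
  rw [dunklOp, fderiv_bernsteinFun_apply_single hx, sum_bernsteinFun_reflection_quotient hinj]
  push_cast
  ring

/-- Step of the Bernstein identity: with
`h_i(y) = D(y)^{a-1} ∏_{l=i}^n y_l`, one has
`T_i(k) h_i (x) = (a + k(i-1)) D(x)^{a-1} ∏_{l=i+1}^n x_l`
at points `x ∈ ℝ₊ⁿ` with pairwise distinct coordinates (0-based indexing: `i : Fin n`
corresponds to the `(i+1)`-th coordinate, so `k(i-1)` becomes `k·i`). -/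
theorem bernstein_step (n : ℕ) (hn : 2 ≤ n) (k : ℝ) (hk : 0 ≤ k)
    (a : ℂ) (i : Fin n) :
    ∀ x : Fin n → ℝ, (∀ m, 0 < x m) → Function.Injective x →
      dunklOp n k i
        (fun y => (∏ m, (y m : ℂ) ^ (a - 1)) * ∏ l ∈ Finset.Ici i, (y l : ℂ)) x
      = (a + ((k * (i : ℕ) : ℝ) : ℂ)) * (∏ m, (x m : ℂ) ^ (a - 1)) *
          ∏ l ∈ Finset.Ioi i, (x l : ℂ) :=
  bernstein_step_general n k a i
end

section
/- Bernstein identity: Let k ≥ 0 and a ∈ ℂ, and let U = {x ∈ ℝ₊ⁿ : the coordinates of x are pairwise distinct}. Define g_0 : U → ℂ by g_0(x) = D(x)^a (principal powers of positive reals) and recursively g_i = T_i(k)g_{i−1} on U for i = 1,…,n. Then each g_i is well-defined and differentiable on U (in fact g_i(x) = ∏_{m=1}^i (a+k(m−1)) · D(x)^{a−1} · ∏_{l=i+1}^n x_l), and the composite satisfies g_n(x) = b_k(a) · D(x)^{a−1} for all x ∈ U, where b_k(a) = ∏_{i=1}^n (a + k(i−1)). -/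
open MeasureTheory Finset

/-- The set `U` of points of the open orthant with pairwise distinct coordinates. -/
def Udist (n : ℕ) : Set (Fin n → ℝ) := {x | (∀ i, 0 < x i) ∧ Function.Injective x}

/-!
On `U`, each `g_i` is a constant multiple of the monomial `x ↦ ∏ x_m ^ e_m` whose exponents are
`a - 1` on the first `i` coordinates and `a` on the others. Applying `T_i(k)` (0-based) to such a
monomial, the derivative contributes `a` times the monomial with exponent `i` lowered to `a - 1`;
for `j < i` the exponents at `i` and `j` differ by one, so the difference quotient of the swap
term is that same monomial, while for `j > i` the swap fixes the exponent vector and the term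
vanishes. Each step therefore multiplies the constant by `a + k i`.
-/

namespace Udist

theorem eq_iInter (n : ℕ) : Udist n =
    (⋂ i, {x | 0 < x i}) ∩ ⋂ (i) (j) (_ : i ≠ j), {x : Fin n → ℝ | x i ≠ x j} := by
  ext x
  simp only [Udist, Function.Injective, Set.mem_inter_iff, Set.mem_iInter]
  exact and_congr Iff.rfl
    ⟨fun h i j hij hx => hij (h hx), fun h i j hx => by_contra (h i j · hx)⟩

theorem isOpen (n : ℕ) : IsOpen (Udist n) := by
  rw [eq_iInter]
  exact (isOpen_iInter_of_finite fun i => isOpen_lt continuous_const (continuous_apply i)).inter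
    (isOpen_iInter_of_finite fun i => isOpen_iInter_of_finite fun j => isOpen_iInter_of_finite
      fun _ => isOpen_ne_fun (continuous_apply i) (continuous_apply j))

theorem comp_perm_mem {n : ℕ} {x : Fin n → ℝ} (hx : x ∈ Udist n) (σ : Equiv.Perm (Fin n)) :
    x ∘ σ ∈ Udist n :=
  ⟨fun i => hx.1 (σ i), hx.2.comp σ.injective⟩

end Udist

theorem dunklOp_congr {n : ℕ} (k : ℝ) (i : Fin n) {f g : (Fin n → ℝ) → ℂ}
    (hfg : Set.EqOn f g (Udist n)) {x : Fin n → ℝ} (hx : x ∈ Udist n) :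
    dunklOp n k i f x = dunklOp n k i g x := by
  have hnhds : f =ᶠ[nhds x] g := Filter.eventuallyEq_of_mem ((Udist.isOpen n).mem_nhds hx) hfg
  unfold dunklOp
  rw [hnhds.fderiv_eq]
  congr 2
  refine sum_congr rfl fun j _ => ?_
  rw [hfg hx, hfg (Udist.comp_perm_mem hx _)]

theorem dunklOp_const_mul {n : ℕ} (k : ℝ) (i : Fin n) (c : ℂ) {f : (Fin n → ℝ) → ℂ}
    {x : Fin n → ℝ} (hf : DifferentiableAt ℝ f x) :
    dunklOp n k i (fun y => c * f y) x = c * dunklOp n k i f x := by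
  unfold dunklOp
  rw [fderiv_const_mul hf, smul_apply, smul_eq_mul, mul_add, mul_sum, mul_sum,
    mul_sum]
  congr 1
  exact sum_congr rfl fun j _ => by ring

theorem Complex.cpow_eq_cpow_sub_one_mul {z : ℂ} (hz : z ≠ 0) (s : ℂ) :
    z ^ s = z ^ (s - 1) * z := by
  conv_lhs => rw [← sub_add_cancel s 1, cpow_add _ _ hz, cpow_one]

noncomputable def cpowMonomial {n : ℕ} (e : Fin n → ℂ) (x : Fin n → ℝ) : ℂ :=
  ∏ m, (x m : ℂ) ^ e m

theorem hasFDerivAt_ofReal_apply_cpow {n : ℕ} (s : ℂ) {x : Fin n → ℝ} (m : Fin n)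
    (hx : 0 < x m) :
    HasFDerivAt (fun y : Fin n → ℝ => (y m : ℂ) ^ s)
      ((s * (x m : ℂ) ^ (s - 1)) • Complex.ofRealCLM.comp (ContinuousLinearMap.proj m)) x :=
  (Complex.hasStrictDerivAt_cpow_const (Or.inl (by exact_mod_cast hx))).hasDerivAt.comp_hasFDerivAt
    x (Complex.ofRealCLM.comp
      (ContinuousLinearMap.proj m : (Fin n → ℝ) →L[ℝ] ℝ)).hasFDerivAt

theorem differentiableAt_cpowMonomial {n : ℕ} (e : Fin n → ℂ) {x : Fin n → ℝ}
    (hx : ∀ m, 0 < x m) : DifferentiableAt ℝ (cpowMonomial e) x :=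
  (HasFDerivAt.finsetProd fun m _ => hasFDerivAt_ofReal_apply_cpow (e m) m (hx m)).differentiableAt

theorem fderiv_cpowMonomial_single {n : ℕ} (e : Fin n → ℂ) {x : Fin n → ℝ}
    (hx : ∀ m, 0 < x m) (p : Fin n) :
    fderiv ℝ (cpowMonomial e) x (Pi.single p 1) =
      e p * cpowMonomial (Function.update e p (e p - 1)) x := by
  have hderiv :=
    HasFDerivAt.finsetProd (u := univ) fun m _ => hasFDerivAt_ofReal_apply_cpow (e m) m (hx m)
  unfold cpowMonomial
  rw [hderiv.fderiv, _root_.sum_apply,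
    sum_eq_single p (fun m _ hmp => by simp [hmp]) (by simp)]
  have hupdate : (fun m => (x m : ℂ) ^ Function.update e p (e p - 1) m) =
      Function.update (fun m => (x m : ℂ) ^ e m) p ((x p : ℂ) ^ (e p - 1)) :=
    funext fun m => Function.apply_update (fun m s => (x m : ℂ) ^ s) e p (e p - 1) m
  rw [hupdate, prod_update_of_mem (mem_univ p), sdiff_singleton_eq_erase]
  simp only [smul_apply, ContinuousLinearMap.coe_comp, Function.comp_apply,
    ContinuousLinearMap.proj_apply, Pi.single_eq_same, Complex.ofRealCLM_apply, smul_eq_mul]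
  push_cast
  ring

theorem cpowMonomial_comp_perm {n : ℕ} (e : Fin n → ℂ) (x : Fin n → ℝ)
    (σ : Equiv.Perm (Fin n)) :
    cpowMonomial e (x ∘ σ) = cpowMonomial (e ∘ σ.symm) x := by
  simpa [cpowMonomial] using Equiv.prod_comp σ fun m => (x m : ℂ) ^ e (σ.symm m)

theorem cpowMonomial_sub_cpowMonomial_comp_swap {n : ℕ} (e : Fin n → ℂ) {x : Fin n → ℝ}
    (hx : ∀ m, 0 < x m) {p j : Fin n} (hpj : p ≠ j) (hej : e j = e p - 1) :
    cpowMonomial e x - cpowMonomial e (x ∘ Equiv.swap p j) =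
      ((x p : ℂ) - x j) * cpowMonomial (Function.update e p (e p - 1)) x := by
  have split (f : Fin n → ℂ) :
      ∏ m, f m = f p * (f j * ∏ m ∈ (univ.erase p).erase j, f m) := by
    rw [mul_prod_erase _ _ (mem_erase.2 ⟨hpj.symm, mem_univ j⟩),
      mul_prod_erase _ _ (mem_univ p)]
  have hrest : ∀ m ∈ (univ.erase p).erase j,
      (e ∘ Equiv.swap p j) m = e m ∧ Function.update e p (e p - 1) m = e m := fun m hm => by
    obtain ⟨hmj, hmp, -⟩ := by simpa only [mem_erase] using hm
    exact ⟨congrArg e (Equiv.swap_apply_of_ne_of_ne hmp hmj), Function.update_of_ne hmp _ _⟩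
  rw [cpowMonomial_comp_perm, Equiv.symm_swap]
  unfold cpowMonomial
  rw [split, split, split, prod_congr rfl fun m hm => congrArg _ (hrest m hm).1,
    prod_congr rfl fun m hm => congrArg _ (hrest m hm).2]
  simp only [Function.comp_apply, Equiv.swap_apply_left, Equiv.swap_apply_right,
    Function.update_self, Function.update_of_ne hpj.symm, hej]
  rw [Complex.cpow_eq_cpow_sub_one_mul (z := (x p : ℂ)) (by exact_mod_cast (hx p).ne') (e p),
    Complex.cpow_eq_cpow_sub_one_mul (z := (x j : ℂ)) (by exact_mod_cast (hx j).ne') (e p)]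
  ring

def bernsteinExp {n : ℕ} (a : ℂ) (i : ℕ) : Fin n → ℂ :=
  fun m => if (m : ℕ) < i then a - 1 else a

theorem update_bernsteinExp {n : ℕ} (a : ℂ) {i : ℕ} (hi : i < n) :
    Function.update (bernsteinExp a i) ⟨i, hi⟩ (a - 1) = bernsteinExp (n := n) a (i + 1) := by
  funext m
  simp only [Function.update_apply, bernsteinExp, Fin.ext_iff]
  split_ifs <;> first | rfl | omega

theorem cpowMonomial_bernsteinExp {n : ℕ} (a : ℂ) (i : ℕ) {x : Fin n → ℝ}
    (hx : ∀ m, 0 < x m) :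
    cpowMonomial (bernsteinExp a i) x =
      (∏ m, (x m : ℂ) ^ (a - 1)) *
        ∏ l ∈ univ.filter (fun l : Fin n => i ≤ (l : ℕ)), (x l : ℂ) := by
  rw [prod_filter, ← prod_mul_distrib]
  refine prod_congr rfl fun m _ => ?_
  by_cases hm : (m : ℕ) < i
  · rw [bernsteinExp, if_pos hm, if_neg (not_le.2 hm), mul_one]
  · rw [bernsteinExp, if_neg hm, if_pos (not_lt.1 hm),
      Complex.cpow_eq_cpow_sub_one_mul (by exact_mod_cast (hx m).ne')]

theorem dunklOp_cpowMonomial_bernsteinExp {n : ℕ} (k : ℝ) (a : ℂ) {i : ℕ} (hi : i < n)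
    {x : Fin n → ℝ} (hx : x ∈ Udist n) :
    dunklOp n k ⟨i, hi⟩ (cpowMonomial (bernsteinExp a i)) x =
      (a + k * i) * cpowMonomial (bernsteinExp a (i + 1)) x := by
  set p : Fin n := ⟨i, hi⟩
  set e : Fin n → ℂ := bernsteinExp a i
  have hep : e p = a := if_neg (lt_irrefl i)
  have hquot : ∀ j ∈ univ.erase p,
      (cpowMonomial e x - cpowMonomial e (x ∘ Equiv.swap p j)) / ((x p : ℂ) - x j) =
        if j < p then cpowMonomial (bernsteinExp a (i + 1)) x else 0 := by
    intro j hj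
    have hpj : p ≠ j := (ne_of_mem_erase hj).symm
    split_ifs with hjp
    · have hxpj : (x p : ℂ) - x j ≠ 0 :=
        sub_ne_zero.2 (Complex.ofReal_injective.ne (hx.2.ne hpj))
      have hej : e j = e p - 1 := by rw [hep]; exact if_pos hjp
      rw [cpowMonomial_sub_cpowMonomial_comp_swap e hx.1 hpj hej, hep, update_bernsteinExp,
        mul_div_cancel_left₀ _ hxpj]
    · have hej : e j = e p := by
        rw [hep]; exact if_neg fun h => hjp (Fin.lt_def.2 h)
      have hswap : e ∘ Equiv.swap p j = e := by
        rw [Equiv.comp_swap_eq_update, ← hej, Function.update_eq_self,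
          Function.update_eq_self_iff.2 hej]
      rw [cpowMonomial_comp_perm, Equiv.symm_swap, hswap, sub_self, zero_div]
  have hcard : #((univ.erase p).filter (· < p)) = i := by
    rw [show (univ.erase p).filter (· < p) = Iio p by ext j; simpa using ne_of_lt, Fin.card_Iio]
  unfold dunklOp
  rw [fderiv_cpowMonomial_single e hx.1, hep, update_bernsteinExp, sum_congr rfl hquot,
    ← sum_filter, sum_const, hcard, nsmul_eq_mul]
  ring

theorem bernstein_identity_general (n : ℕ) (k : ℝ) (a : ℂ)
    (g : ℕ → ((Fin n → ℝ) → ℂ))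
    (hg0 : ∀ x ∈ Udist n, g 0 x = ∏ m, (x m : ℂ) ^ a)
    (hgrec : ∀ (i : ℕ) (hi : i < n), ∀ x ∈ Udist n,
      g (i + 1) x = dunklOp n k ⟨i, hi⟩ (g i) x) :
    (∀ i : ℕ, i ≤ n →
      DifferentiableOn ℝ (g i) (Udist n) ∧
      ∀ x ∈ Udist n,
        g i x = (∏ m ∈ Finset.range i, (a + ((k * (m : ℝ) : ℝ) : ℂ))) *
          (∏ m, (x m : ℂ) ^ (a - 1)) *
          ∏ l ∈ Finset.univ.filter (fun l : Fin n => i ≤ (l : ℕ)), (x l : ℂ)) ∧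
    ∀ x ∈ Udist n,
      g n x = (∏ m ∈ Finset.range n, (a + ((k * (m : ℝ) : ℝ) : ℂ))) *
        ∏ m, (x m : ℂ) ^ (a - 1) := by
  set c : ℕ → ℂ := fun i => ∏ m ∈ range i, (a + ((k * (m : ℝ) : ℝ) : ℂ))
  have hmonomial : ∀ i ≤ n,
      Set.EqOn (g i) (fun x => c i * cpowMonomial (bernsteinExp a i) x) (Udist n) := by
    intro i
    induction i with
    | zero => intro _ x hx; simp [c, hg0 x hx, cpowMonomial, bernsteinExp]
    | succ i ih =>
      intro hi x hx
      rw [hgrec i hi x hx, dunklOp_congr k _ (ih (Nat.le_of_succ_le hi)) hx,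
        dunklOp_const_mul k _ _ (differentiableAt_cpowMonomial _ hx.1),
        dunklOp_cpowMonomial_bernsteinExp k a hi hx]
      simp only [c, prod_range_succ]
      push_cast
      ring
  have hformula : ∀ i ≤ n, ∀ x ∈ Udist n, g i x = c i * (∏ m, (x m : ℂ) ^ (a - 1)) *
      ∏ l ∈ univ.filter (fun l : Fin n => i ≤ (l : ℕ)), (x l : ℂ) := fun i hi x hx => by
    rw [hmonomial i hi hx, mul_assoc]
    exact congrArg (c i * ·) (cpowMonomial_bernsteinExp a i hx.1)
  refine ⟨fun i hi => ⟨fun x hx => ?_, hformula i hi⟩, fun x hx => ?_⟩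
  · exact (((differentiableAt_cpowMonomial _ hx.1).const_mul (c i)).differentiableWithinAt).congr
      (hmonomial i hi) (hmonomial i hi hx)
  · rw [hformula n le_rfl x hx, filter_false_of_mem fun l _ => not_le.2 l.isLt, prod_empty,
      mul_one]

/-- Bernstein identity: with `g_0 = D(·)^a` on `U` and
`g_i = T_i(k) g_{i-1}` on `U` (0-based: `g_{i+1} = T_{i+1}(k) g_i`), each `g_i` is
differentiable on `U` and equals
`∏_{m=1}^i (a+k(m-1)) · D(x)^{a-1} · ∏_{l=i+1}^n x_l`, and in particular
`g_n = b_k(a) D(·)^{a-1}` with `b_k(a) = ∏_{i=1}^n (a+k(i-1))`. -/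
theorem bernstein_identity (n : ℕ) (hn : 2 ≤ n) (k : ℝ) (hk : 0 ≤ k) (a : ℂ)
    (g : ℕ → ((Fin n → ℝ) → ℂ))
    (hg0 : ∀ x ∈ Udist n, g 0 x = ∏ m, (x m : ℂ) ^ a)
    (hgrec : ∀ (i : ℕ) (hi : i < n), ∀ x ∈ Udist n,
      g (i + 1) x = dunklOp n k ⟨i, hi⟩ (g i) x) :
    (∀ i : ℕ, i ≤ n →
      DifferentiableOn ℝ (g i) (Udist n) ∧
      ∀ x ∈ Udist n,
        g i x = (∏ m ∈ Finset.range i, (a + ((k * (m : ℝ) : ℝ) : ℂ))) *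
          (∏ m, (x m : ℂ) ^ (a - 1)) *
          ∏ l ∈ Finset.univ.filter (fun l : Fin n => i ≤ (l : ℕ)), (x l : ℂ)) ∧
    ∀ x ∈ Udist n,
      g n x = (∏ m ∈ Finset.range n, (a + ((k * (m : ℝ) : ℝ) : ℂ))) *
        ∏ m, (x m : ℂ) ^ (a - 1) :=
  bernstein_identity_general n k a g hg0 hgrec
end

section
/- Properties of the type-A Riesz distributions: Let k > 0 and let R be a family of type-A Riesz distributions. Then for every μ ∈ ℂ and every Schwartz function φ on ℝⁿ: (1) ⟨R_μ, φ∘σ⟩ = ⟨R_μ, φ⟩ for every permutation σ ∈ S_n acting on ℝⁿ by permuting coordinates; (2) if the support of φ is disjoint from the closed orthant [0,∞)ⁿ, then ⟨R_μ, φ⟩ = 0; (3) ⟨R_μ, D·φ⟩ = ∏_{j=1}^n (μ − k(j−1)) · ⟨R_{μ+1}, φ⟩, where (D·φ)(x) = (∏_{i=1}^n x_i)·φ(x). -/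
open MeasureTheory Finset

/-- The type-A Dunkl weight `ω_k(x) = ∏_{i<j} |x_i - x_j|^{2k}`. -/
noncomputable def wk (n : ℕ) (k : ℝ) (x : Fin n → ℝ) : ℝ :=
  ∏ i : Fin n, ∏ j ∈ Finset.Ioi i, |x i - x j| ^ (2 * k)

/-- The open positive orthant `ℝ₊ⁿ = (0,∞)ⁿ`. -/
def Rplus (n : ℕ) : Set (Fin n → ℝ) := {x | ∀ i, 0 < x i}

/-- The constant `d_n(k) = ∏_{j=1}^n Γ(1+jk)/Γ(1+k)`. -/
noncomputable def dnk (n : ℕ) (k : ℝ) : ℝ :=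
  ∏ j ∈ Finset.range n, Real.Gamma (1 + (j + 1) * k) / Real.Gamma (1 + k)

/-- The multivariable Gamma function `Γ_n(μ;k) = ∏_{j=1}^n Γ(μ - k(j-1))`. -/
noncomputable def Gammank (n : ℕ) (k : ℝ) (μ : ℂ) : ℂ :=
  ∏ j ∈ Finset.range n, Complex.Gamma (μ - ((k * (j : ℝ) : ℝ) : ℂ))

/-- A family of type-A Riesz distributions for multiplicity `k > 0`: a map `R : ℂ → 𝓢'(ℝⁿ)`
such that `μ ↦ ⟨R_μ, φ⟩` is entire for every Schwartz `φ`, and for `Re μ > μ₀ = k(n-1)`,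
`⟨R_μ, φ⟩ = (d_n(k)Γ_n(μ;k))⁻¹ ∫_{ℝ₊ⁿ} φ(x) D(x)^{μ-μ₀-1} ω_k(x) dx`. -/
def IsRieszFamily (n : ℕ) (k : ℝ)
    (R : ℂ → (SchwartzMap (Fin n → ℝ) ℂ →L[ℂ] ℂ)) : Prop :=
  (∀ φ : SchwartzMap (Fin n → ℝ) ℂ, Differentiable ℂ (fun μ => R μ φ)) ∧
  ∀ μ : ℂ, k * ((n : ℝ) - 1) < μ.re → ∀ φ : SchwartzMap (Fin n → ℝ) ℂ,
    R μ φ = ((dnk n k : ℂ) * Gammank n k μ)⁻¹ *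
      ∫ x in Rplus n,
        φ x * (∏ i, (x i : ℂ) ^ (μ - ((k * ((n : ℝ) - 1) : ℝ) : ℂ) - 1)) * (wk n k x : ℂ)

/-!
Each of the three properties is an identity between entire functions of `μ`, so by the identity
theorem it suffices to check it on a right half-plane, where `R_μ` is given by the integral over
`ℝ₊ⁿ`. There, (1) is the change of variables `x ↦ x ∘ σ`, which preserves Lebesgue measure,
`ℝ₊ⁿ`, `D` and `ω_k`; (2) holds because `φ` vanishes on `ℝ₊ⁿ`; and (3) follows from
`D(x) · D(x)^{μ-μ₀-1} = D(x)^{(μ+1)-μ₀-1}` together with `Γ(s + 1) = s Γ(s)` in each factor of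
`Γ_n(μ + 1; k)`.
-/

lemma Differentiable.eq_of_forall_re_gt {f g : ℂ → ℂ} (hf : Differentiable ℂ f)
    (hg : Differentiable ℂ g) (c : ℝ) (h : ∀ z : ℂ, c < z.re → f z = g z) : f = g := by
  apply AnalyticOnNhd.eq_of_eventuallyEq (𝕜 := ℂ)
    (Complex.analyticOnNhd_univ_iff_differentiable.mpr hf)
    (Complex.analyticOnNhd_univ_iff_differentiable.mpr hg)
    (z₀ := ((c + 1 : ℝ) : ℂ))
  filter_upwards [IsOpen.mem_nhds (isOpen_lt continuous_const Complex.continuous_re)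
    (by simp : c < ((c + 1 : ℝ) : ℂ).re)] with z hz using h z hz

lemma Finset.prod_prod_Ioi_comp_perm {ι M : Type*} [Fintype ι] [LinearOrder ι]
    [LocallyFiniteOrderTop ι] [CommMonoid M] (σ : Equiv.Perm ι) {g : ι → ι → M}
    (hg : ∀ i j, g i j = g j i) :
    ∏ i, ∏ j ∈ Ioi i, g (σ i) (σ j) = ∏ i, ∏ j ∈ Ioi i, g i j := by
  rw [prod_sigma', prod_sigma']
  refine prod_nbij' (fun p => ⟨min (σ p.1) (σ p.2), max (σ p.1) (σ p.2)⟩)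
    (fun p => ⟨min (σ.symm p.1) (σ.symm p.2), max (σ.symm p.1) (σ.symm p.2)⟩) ?_ ?_ ?_ ?_ ?_
  all_goals rintro ⟨a, b⟩ hab
  all_goals simp only [mem_sigma, mem_univ, mem_Ioi, true_and] at hab ⊢
  · exact min_lt_max.2 (σ.injective.ne hab.ne)
  · exact min_lt_max.2 (σ.symm.injective.ne hab.ne)
  · rcases le_total (σ a) (σ b) with h | h <;> simp [h, hab.le]
  · rcases le_total (σ.symm a) (σ.symm b) with h | h <;> simp [h, hab.le]
  · rcases le_total (σ a) (σ b) with h | h <;> simp [h, hg (σ a)]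

lemma wk_comp_perm {n : ℕ} (k : ℝ) (σ : Equiv.Perm (Fin n)) (x : Fin n → ℝ) :
    wk n k (fun i => x (σ i)) = wk n k x :=
  prod_prod_Ioi_comp_perm σ (g := fun i j => |x i - x j| ^ (2 * k)) fun i j => by
    rw [abs_sub_comm]

lemma measurableSet_Rplus (n : ℕ) : MeasurableSet (Rplus n) := by
  simpa [Rplus, Set.pi] using
    MeasurableSet.univ_pi fun _ : Fin n => measurableSet_Ioi (a := (0 : ℝ))

lemma Gammank_add_one {n : ℕ} {k : ℝ} {μ : ℂ}
    (hμ : ∀ j ∈ range n, μ - ((k * (j : ℝ) : ℝ) : ℂ) ≠ 0) :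
    Gammank n k (μ + 1) = (∏ j ∈ range n, (μ - ((k * (j : ℝ) : ℝ) : ℂ))) * Gammank n k μ := by
  rw [Gammank, Gammank, ← prod_mul_distrib]
  refine prod_congr rfl fun j hj => ?_
  rw [add_sub_right_comm, Complex.Gamma_add_one _ (hμ j hj)]

noncomputable def rieszIntegral (n : ℕ) (k : ℝ) (μ : ℂ) (f : (Fin n → ℝ) → ℂ) : ℂ :=
  ∫ x in Rplus n,
    f x * (∏ i, (x i : ℂ) ^ (μ - ((k * ((n : ℝ) - 1) : ℝ) : ℂ) - 1)) * (wk n k x : ℂ)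

lemma rieszIntegral_comp_perm {n : ℕ} (k : ℝ) (μ : ℂ) (σ : Equiv.Perm (Fin n))
    (f : (Fin n → ℝ) → ℂ) :
    rieszIntegral n k μ (fun x => f (fun i => x (σ i))) = rieszIntegral n k μ f := by
  have hT : ∀ x, MeasurableEquiv.piCongrLeft (fun _ : Fin n => ℝ) σ.symm x = fun i => x (σ i) :=
    fun x => by ext i; simp [MeasurableEquiv.piCongrLeft, Equiv.piCongrLeft]
  have hpre : MeasurableEquiv.piCongrLeft (fun _ : Fin n => ℝ) σ.symm ⁻¹' Rplus n = Rplus n := by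
    ext x
    simp only [Rplus, Set.preimage_ofPred_eq, hT]
    exact ⟨fun h i => by simpa using h (σ.symm i), fun h i => h (σ i)⟩
  have hcov := (volume_measurePreserving_piCongrLeft (fun _ : Fin n => ℝ) σ.symm)
    |>.setIntegral_preimage_emb (MeasurableEquiv.measurableEmbedding _)
      (fun x => f x * (∏ i, (x i : ℂ) ^ (μ - ((k * ((n : ℝ) - 1) : ℝ) : ℂ) - 1)) *
        (wk n k x : ℂ)) (Rplus n)
  rw [hpre] at hcov
  rw [rieszIntegral, rieszIntegral, ← hcov]
  refine setIntegral_congr_fun (measurableSet_Rplus n) fun x _ => ?_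
  simp only [hT, wk_comp_perm]
  rw [Equiv.prod_comp σ fun i => (x i : ℂ) ^ _]

lemma rieszIntegral_eq_zero {n : ℕ} (k : ℝ) (μ : ℂ) {f : (Fin n → ℝ) → ℂ}
    (hf : ∀ x ∈ Rplus n, f x = 0) : rieszIntegral n k μ f = 0 := by
  rw [rieszIntegral, setIntegral_congr_fun (measurableSet_Rplus n) (g := fun _ => 0)
    fun x hx => by simp [hf x hx], integral_zero]

lemma rieszIntegral_prod_mul {n : ℕ} (k : ℝ) (μ : ℂ) (f : (Fin n → ℝ) → ℂ) :
    rieszIntegral n k μ (fun x => (∏ i, (x i : ℂ)) * f x) = rieszIntegral n k (μ + 1) f := by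
  refine setIntegral_congr_fun (measurableSet_Rplus n) fun x hx => ?_
  have hD : (∏ i, (x i : ℂ)) * ∏ i, (x i : ℂ) ^ (μ - ((k * ((n : ℝ) - 1) : ℝ) : ℂ) - 1) =
      ∏ i, (x i : ℂ) ^ (μ + 1 - ((k * ((n : ℝ) - 1) : ℝ) : ℂ) - 1) := by
    rw [← prod_mul_distrib]
    refine prod_congr rfl fun i _ => ?_
    have hx0 : (x i : ℂ) ≠ 0 := Complex.ofReal_ne_zero.mpr (hx i).ne'
    rw [add_sub_right_comm, add_sub_right_comm, Complex.cpow_add _ _ hx0, Complex.cpow_one,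
      mul_comm]
  rw [← hD]
  ring

namespace IsRieszFamily

variable {n : ℕ} {k : ℝ} {R : ℂ → (SchwartzMap (Fin n → ℝ) ℂ →L[ℂ] ℂ)}

lemma apply_eq_rieszIntegral (hR : IsRieszFamily n k R) {μ : ℂ}
    (hμ : k * ((n : ℝ) - 1) < μ.re) (φ : SchwartzMap (Fin n → ℝ) ℂ) :
    R μ φ = ((dnk n k : ℂ) * Gammank n k μ)⁻¹ * rieszIntegral n k μ φ :=
  hR.2 μ hμ φ

lemma apply_comp_perm (hR : IsRieszFamily n k R) (σ : Equiv.Perm (Fin n))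
    {φ ψ : SchwartzMap (Fin n → ℝ) ℂ} (hψ : ∀ x, ψ x = φ (fun i => x (σ i))) (μ : ℂ) :
    R μ ψ = R μ φ := by
  refine congrFun ((hR.1 ψ).eq_of_forall_re_gt (hR.1 φ) (k * (n - 1)) fun z hz => ?_) μ
  rw [hR.apply_eq_rieszIntegral hz, hR.apply_eq_rieszIntegral hz, funext hψ,
    rieszIntegral_comp_perm]

lemma apply_eq_zero_of_disjoint (hR : IsRieszFamily n k R) {φ : SchwartzMap (Fin n → ℝ) ℂ}
    (hφ : Disjoint (tsupport ⇑φ) {x | ∀ i, 0 ≤ x i}) (μ : ℂ) : R μ φ = 0 := by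
  refine congrFun ((hR.1 φ).eq_of_forall_re_gt (differentiable_const 0) (k * (n - 1))
    fun z hz => ?_) μ
  rw [hR.apply_eq_rieszIntegral hz, rieszIntegral_eq_zero _ _ fun x hx => ?_, mul_zero]
  exact image_eq_zero_of_notMem_tsupport fun h => hφ.notMem_of_mem_left h fun i => (hx i).le

lemma apply_prod_mul (hR : IsRieszFamily n k R) {φ ψ : SchwartzMap (Fin n → ℝ) ℂ}
    (hψ : ∀ x, ψ x = (∏ i, (x i : ℂ)) * φ x) (μ : ℂ) :
    R μ ψ = (∏ j ∈ range n, (μ - ((k * (j : ℝ) : ℝ) : ℂ))) * R (μ + 1) φ := by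
  have hdiff : Differentiable ℂ
      fun z => (∏ j ∈ range n, (z - ((k * (j : ℝ) : ℝ) : ℂ))) * R (z + 1) φ :=
    (by fun_prop : Differentiable ℂ _).mul ((hR.1 φ).comp (differentiable_id.add_const 1))
  refine congrFun ((hR.1 ψ).eq_of_forall_re_gt hdiff (max (k * (n - 1)) (|k| * n))
    fun z hz => ?_) μ
  rw [max_lt_iff] at hz
  have hz1 : k * ((n : ℝ) - 1) < (z + 1).re := by simp; linarith
  have hfac : ∀ j ∈ range n, z - ((k * (j : ℝ) : ℝ) : ℂ) ≠ 0 := fun j hj h0 => by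
    have hjn : (j : ℝ) ≤ n := by exact_mod_cast (mem_range.1 hj).le
    have hre : z.re = k * j := by simpa [sub_eq_zero] using congrArg Complex.re h0
    nlinarith [le_abs_self k, abs_nonneg k]
  rw [hR.apply_eq_rieszIntegral hz.1, hR.apply_eq_rieszIntegral hz1, funext hψ,
    rieszIntegral_prod_mul, Gammank_add_one hfac, mul_left_comm (dnk n k : ℂ),
    mul_inv _ (_ * _), mul_assoc _⁻¹, mul_inv_cancel_left₀ (prod_ne_zero_iff.2 hfac)]

end IsRieszFamily

theorem riesz_properties_general (n : ℕ) (k : ℝ)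
    (R : ℂ → (SchwartzMap (Fin n → ℝ) ℂ →L[ℂ] ℂ)) (hR : IsRieszFamily n k R)
    (μ : ℂ) (φ : SchwartzMap (Fin n → ℝ) ℂ) :
    (∀ (σ : Equiv.Perm (Fin n)) (ψ : SchwartzMap (Fin n → ℝ) ℂ),
      (∀ x : Fin n → ℝ, ψ x = φ (fun i => x (σ i))) → R μ ψ = R μ φ) ∧
    (Disjoint (tsupport ⇑φ) {x : Fin n → ℝ | ∀ i, 0 ≤ x i} → R μ φ = 0) ∧
    (∀ ψ : SchwartzMap (Fin n → ℝ) ℂ,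
      (∀ x : Fin n → ℝ, ψ x = (∏ i, (x i : ℂ)) * φ x) →
      R μ ψ = (∏ j ∈ Finset.range n, (μ - ((k * (j : ℝ) : ℝ) : ℂ))) * R (μ + 1) φ) :=
  ⟨fun σ _ hψ => hR.apply_comp_perm σ hψ μ, fun hφ => hR.apply_eq_zero_of_disjoint hφ μ,
    fun _ hψ => hR.apply_prod_mul hψ μ⟩

/-- Properties of the type-A Riesz distributions: `S_n`-invariance, support in
the closed orthant `[0,∞)ⁿ`, and the identity `D(x)·R_μ = ∏_{j=1}^n (μ-k(j-1)) · R_{μ+1}`. -/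
theorem riesz_properties (n : ℕ) (hn : 2 ≤ n) (k : ℝ) (hk : 0 < k)
    (R : ℂ → (SchwartzMap (Fin n → ℝ) ℂ →L[ℂ] ℂ)) (hR : IsRieszFamily n k R)
    (μ : ℂ) (φ : SchwartzMap (Fin n → ℝ) ℂ) :
    (∀ (σ : Equiv.Perm (Fin n)) (ψ : SchwartzMap (Fin n → ℝ) ℂ),
      (∀ x : Fin n → ℝ, ψ x = φ (fun i => x (σ i))) → R μ ψ = R μ φ) ∧
    (Disjoint (tsupport ⇑φ) {x : Fin n → ℝ | ∀ i, 0 ≤ x i} → R μ φ = 0) ∧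
    (∀ ψ : SchwartzMap (Fin n → ℝ) ℂ,
      (∀ x : Fin n → ℝ, ψ x = (∏ i, (x i : ℂ)) * φ x) →
      R μ ψ = (∏ j ∈ Finset.range n, (μ - ((k * (j : ℝ) : ℝ) : ℂ))) * R (μ + 1) φ) :=
  riesz_properties_general n k R hR μ φ
end
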